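/- The integral ∫₀^∞ √ω · (1 − coth(√ω)) dω converges and equals −ζ(3). -/

import Mathlib

open MeasureTheory Real

/-- `ζ(3) = Σ_{n≥1} 1/n³`. -/
noncomputable def zeta3 : ℝ := ∑' n : ℕ, 1 / ((n : ℝ) + 1) ^ 3

/-- `coth x = cosh x / sinh x`. -/
noncomputable def coth (x : ℝ) : ℝ := Real.cosh x / Real.sinh x

/-!
Substituting `ω = t²` turns the integral into `2 ∫₀^∞ t² (1 - coth t) dt`. For `t > 0`,
`1 - coth t = -2 / (e^{2t} - 1) = -2 Σ_{n ≥ 1} e^{-2nt}`, and `∫₀^∞ t² e^{-2nt} dt = 2 / (2n)³`.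
All terms have the same sign, so the series of the integrals of their absolute values is
`ζ(3) / 2 < ∞`; this justifies both the integrability and the termwise integration.
-/

open Set Filter
open scoped Nat

section SummableIntegrals

variable {α E ι : Type*} [MeasurableSpace α] {μ : Measure α} [NormedAddCommGroup E] [Countable ι]
  {F : ι → α → E} {f : α → E}

theorem integrable_of_hasSum_of_summable_integral_norm
    (hF_int : ∀ i, Integrable (F i) μ) (hF_sum : Summable fun i ↦ ∫ a, ‖F i a‖ ∂μ)
    (hf : ∀ᵐ a ∂μ, HasSum (fun i ↦ F i a) (f a)) : Integrable f μ := by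
  refine ⟨aestronglyMeasurable_of_tendsto_ae atTop
    (fun s ↦ Finset.aestronglyMeasurable_fun_sum s fun i _ ↦ (hF_int i).1) hf, ?_⟩
  have h_le : ∫⁻ a, ‖f a‖ₑ ∂μ ≤ ∑' i, ∫⁻ a, ‖F i a‖ₑ ∂μ := by
    rw [← lintegral_tsum fun i ↦ (hF_int i).1.enorm]
    refine lintegral_mono_ae (hf.mono fun a ha ↦ ?_)
    rw [← ha.tsum_eq]
    exact enorm_tsum_le_tsum_enorm
  have h_fin : ∑' i, ∫⁻ a, ‖F i a‖ₑ ∂μ = ENNReal.ofReal (∑' i, ∫ a, ‖F i a‖ ∂μ) := by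
    rw [ENNReal.ofReal_tsum_of_nonneg (fun i ↦ integral_nonneg fun a ↦ norm_nonneg _) hF_sum]
    simp_rw [ofReal_integral_norm_eq_lintegral_enorm (hF_int _)]
  exact h_le.trans_lt (h_fin ▸ ENNReal.ofReal_lt_top)

theorem hasSum_integral_of_hasSum_of_summable_integral_norm [NormedSpace ℝ E]
    (hF_int : ∀ i, Integrable (F i) μ) (hF_sum : Summable fun i ↦ ∫ a, ‖F i a‖ ∂μ)
    (hf : ∀ᵐ a ∂μ, HasSum (fun i ↦ F i a) (f a)) :
    HasSum (fun i ↦ ∫ a, F i a ∂μ) (∫ a, f a ∂μ) := by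
  rw [integral_congr_ae (hf.mono fun a ha ↦ ha.tsum_eq.symm)]
  exact hasSum_integral_of_summable_integral_norm hF_int hF_sum

end SummableIntegrals

theorem integral_pow_mul_exp_neg_mul_Ioi (k : ℕ) {b : ℝ} (hb : 0 < b) :
    ∫ t in Ioi (0 : ℝ), t ^ k * exp (-(b * t)) = k ! / b ^ (k + 1) := by
  have h := integral_rpow_mul_exp_neg_mul_Ioi (a := k + 1) (by positivity) hb
  rw [add_sub_cancel_right, Gamma_nat_eq_factorial, ← Nat.cast_succ, rpow_natCast] at h
  simp_rw [rpow_natCast] at h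
  rw [h, one_div_pow, one_div_mul_eq_div]

theorem integrableOn_pow_mul_exp_neg_mul_Ioi (k : ℕ) {b : ℝ} (hb : 0 < b) :
    IntegrableOn (fun t ↦ t ^ k * exp (-(b * t))) (Ioi 0) := by
  simpa [rpow_natCast, neg_mul] using integrableOn_rpow_mul_exp_neg_mul_rpow (s := k) (p := 1)
    (neg_one_lt_zero.trans_le k.cast_nonneg) one_pos hb

theorem one_sub_coth_eq {t : ℝ} (ht : 0 < t) :
    1 - coth t = -2 * exp (-(2 * t)) / (1 - exp (-(2 * t))) := by
  set q := exp (-(2 * t))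
  have hq : 1 - q ≠ 0 := (sub_pos.2 (exp_lt_one_iff.2 (by linarith))).ne'
  have h_exp : exp t * q = exp (-t) := by rw [← exp_add]; ring_nf
  have hcosh : cosh t = exp t / 2 * (1 + q) := by rw [cosh_eq, ← h_exp]; ring
  have hsinh : sinh t = exp t / 2 * (1 - q) := by rw [sinh_eq, ← h_exp]; ring
  rw [coth, hcosh, hsinh, mul_div_mul_left _ _ (by positivity)]
  field_simp
  ring

theorem hasSum_one_sub_coth {t : ℝ} (ht : 0 < t) :
    HasSum (fun n : ℕ ↦ -2 * exp (-(2 * (n + 1) * t))) (1 - coth t) := by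
  have hq : exp (-(2 * t)) < 1 := exp_lt_one_iff.2 (by linarith)
  have hterm (n : ℕ) :
      -2 * exp (-(2 * t)) * exp (-(2 * t)) ^ n = -2 * exp (-(2 * (n + 1) * t)) := by
    rw [mul_assoc, ← exp_nat_mul, ← exp_add]
    ring_nf
  rw [one_sub_coth_eq ht, div_eq_mul_inv]
  simpa only [hterm] using
    (hasSum_geometric_of_lt_one (exp_pos _).le hq).mul_left (-2 * exp (-(2 * t)))

theorem hasSum_zeta3 : HasSum (fun n : ℕ ↦ 1 / ((n : ℝ) + 1) ^ 3) zeta3 := by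
  have h := (summable_nat_add_iff 1).2 (Real.summable_one_div_nat_pow.2 (by norm_num : 1 < 3))
  push_cast at h
  exact h.hasSum

theorem hasSum_sq_mul_one_sub_coth {t : ℝ} (ht : 0 < t) :
    HasSum (fun n : ℕ ↦ -2 * (t ^ 2 * exp (-(2 * (n + 1) * t)))) (t ^ 2 * (1 - coth t)) := by
  simpa only [mul_left_comm] using (hasSum_one_sub_coth ht).mul_left (t ^ 2)

theorem integral_sq_mul_exp_neg_two_mul_succ (n : ℕ) :
    ∫ t in Ioi (0 : ℝ), -2 * (t ^ 2 * exp (-(2 * (n + 1) * t))) =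
      -(1 / ((n : ℝ) + 1) ^ 3) / 2 := by
  rw [integral_const_mul, integral_pow_mul_exp_neg_mul_Ioi 2 (by positivity)]
  field_simp
  ring

theorem integral_norm_sq_mul_exp_neg_two_mul_succ (n : ℕ) :
    ∫ t in Ioi (0 : ℝ), ‖-2 * (t ^ 2 * exp (-(2 * (n + 1) * t)))‖ =
      1 / ((n : ℝ) + 1) ^ 3 / 2 := by
  have h_nonpos (t : ℝ) : -2 * (t ^ 2 * exp (-(2 * (n + 1) * t))) ≤ 0 :=
    mul_nonpos_of_nonpos_of_nonneg (by norm_num) (by positivity)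
  simp_rw [Real.norm_of_nonpos (h_nonpos _)]
  rw [integral_neg, integral_sq_mul_exp_neg_two_mul_succ]
  ring

theorem integrableOn_sq_mul_exp_neg_two_mul_succ (n : ℕ) :
    IntegrableOn (fun t : ℝ ↦ -2 * (t ^ 2 * exp (-(2 * (n + 1) * t)))) (Ioi 0) :=
  (integrableOn_pow_mul_exp_neg_mul_Ioi 2 (by positivity)).const_mul (-2)

theorem summable_integral_norm_sq_mul_exp_neg_two_mul_succ :
    Summable fun n : ℕ ↦ ∫ t in Ioi (0 : ℝ), ‖-2 * (t ^ 2 * exp (-(2 * (n + 1) * t)))‖ := by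
  simp_rw [integral_norm_sq_mul_exp_neg_two_mul_succ]
  exact hasSum_zeta3.summable.div_const 2

theorem ae_hasSum_sq_mul_one_sub_coth :
    ∀ᵐ t ∂volume.restrict (Ioi (0 : ℝ)),
      HasSum (fun n : ℕ ↦ -2 * (t ^ 2 * exp (-(2 * (n + 1) * t)))) (t ^ 2 * (1 - coth t)) :=
  (ae_restrict_iff' measurableSet_Ioi).2 (.of_forall fun _ ht ↦ hasSum_sq_mul_one_sub_coth ht)

theorem integrableOn_sq_mul_one_sub_coth :
    IntegrableOn (fun t ↦ t ^ 2 * (1 - coth t)) (Ioi 0) :=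
  integrable_of_hasSum_of_summable_integral_norm integrableOn_sq_mul_exp_neg_two_mul_succ
    summable_integral_norm_sq_mul_exp_neg_two_mul_succ ae_hasSum_sq_mul_one_sub_coth

theorem integral_sq_mul_one_sub_coth :
    ∫ t in Ioi (0 : ℝ), t ^ 2 * (1 - coth t) = -zeta3 / 2 := by
  have h := hasSum_integral_of_hasSum_of_summable_integral_norm
    integrableOn_sq_mul_exp_neg_two_mul_succ summable_integral_norm_sq_mul_exp_neg_two_mul_succ
    ae_hasSum_sq_mul_one_sub_coth
  simp_rw [integral_sq_mul_exp_neg_two_mul_succ] at h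
  exact h.unique (hasSum_zeta3.neg.div_const 2)

theorem sqrt_mul_one_sub_coth_sqrt_comp_rpow_two {t : ℝ} (ht : 0 < t) :
    (|(2 : ℝ)| * t ^ ((2 : ℝ) - 1)) • (√(t ^ (2 : ℝ)) * (1 - coth √(t ^ (2 : ℝ)))) =
      2 * (t ^ 2 * (1 - coth t)) := by
  rw [rpow_two, sqrt_sq ht.le, smul_eq_mul, abs_two, show (2 : ℝ) - 1 = 1 by norm_num, rpow_one]
  ring

theorem integral_sqrt_one_sub_coth :
    IntegrableOn (fun ω : ℝ => Real.sqrt ω * (1 - coth (Real.sqrt ω))) (Set.Ioi 0) ∧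
    ∫ ω in Set.Ioi (0 : ℝ), Real.sqrt ω * (1 - coth (Real.sqrt ω)) = -zeta3 := by
  constructor
  · rw [← integrableOn_Ioi_comp_rpow_iff _ two_ne_zero]
    exact IntegrableOn.congr_fun (integrableOn_sq_mul_one_sub_coth.const_mul 2)
      (fun t (ht : 0 < t) ↦ (sqrt_mul_one_sub_coth_sqrt_comp_rpow_two ht).symm) measurableSet_Ioi
  · rw [← integral_comp_rpow_Ioi _ two_ne_zero,
      setIntegral_congr_fun measurableSet_Ioi fun t (ht : 0 < t) ↦
        sqrt_mul_one_sub_coth_sqrt_comp_rpow_two ht,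
      integral_const_mul, integral_sq_mul_one_sub_coth]
    ring
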